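/- Let n ≥ 1 and let a₁, …, aₙ be positive integers. Let Λ = {(i,j) : 1 ≤ i ≤ j ≤ n} index the monomials of degree exactly 2 in the variables x₁, …, xₙ, and let z : ℝⁿ → ℝ^Λ be defined by z_{(i,j)}(x) = xᵢ xⱼ. Then there exist ε ∈ ℝ and a symmetric diagonally dominant matrix Q indexed by Λ × Λ such that for all x ∈ ℝⁿ, q^h_{a,ε}(x) = Σ_{α,β ∈ Λ} Q_{αβ} z_α(x) z_β(x), where q^h_{a,ε}(x) = Σᵢ xᵢ⁴ + ((Σᵢ aᵢ xᵢ)² − 2 Σᵢ xᵢ²)·((1/n) Σᵢ xᵢ²) + (n − ε)·((1/n) Σᵢ xᵢ²)². (That is, the LP maximizing ε subject to q^h_{a,ε} being dsos is always feasible.) -/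
import Mathlib

namespace DsosAux

variable {n : ℕ}

lemma sym_sum (G : Fin n × Fin n → ℝ) :
    ∑ p : Fin n × Fin n, G p =
    ∑ p ∈ Finset.univ.filter (fun p : Fin n × Fin n => p.1 ≤ p.2),
      (G p + G p.swap - if p.1 = p.2 then G p else 0) := by
  classical
  have hsplit : ∑ p : Fin n × Fin n, G p =
      (∑ p ∈ Finset.univ.filter (fun p : Fin n × Fin n => p.1 ≤ p.2), G p) +
      ∑ p ∈ Finset.univ.filter (fun p : Fin n × Fin n => ¬ p.1 ≤ p.2), G p :=
    (Finset.sum_filter_add_sum_filter_not _ _ _).symm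
  have hswap : ∑ p ∈ Finset.univ.filter (fun p : Fin n × Fin n => ¬ p.1 ≤ p.2), G p =
      ∑ p ∈ Finset.univ.filter (fun p : Fin n × Fin n => p.1 < p.2), G p.swap := by
    refine Finset.sum_equiv (Equiv.prodComm (Fin n) (Fin n)) ?_ ?_
    · intro p; simp [not_le, Equiv.prodComm]
    · intro p _; simp [Equiv.prodComm]
  have hle_split : ∀ (H : Fin n × Fin n → ℝ),
      ∑ p ∈ Finset.univ.filter (fun p : Fin n × Fin n => p.1 ≤ p.2), H p =
      (∑ p ∈ Finset.univ.filter (fun p : Fin n × Fin n => p.1 = p.2), H p) +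
      ∑ p ∈ Finset.univ.filter (fun p : Fin n × Fin n => p.1 < p.2), H p := by
    intro H
    rw [← Finset.sum_filter_add_sum_filter_not
        (Finset.univ.filter (fun p : Fin n × Fin n => p.1 ≤ p.2))
        (fun p : Fin n × Fin n => p.1 = p.2) H]
    rw [Finset.filter_filter, Finset.filter_filter]
    congr 1
    · apply Finset.sum_congr _ (fun _ _ => rfl)
      ext p
      simp only [Finset.mem_filter, Finset.mem_univ, true_and]
      exact ⟨fun h => h.2, fun h => ⟨le_of_eq h, h⟩⟩
    · apply Finset.sum_congr _ (fun _ _ => rfl)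
      ext p
      simp only [Finset.mem_filter, Finset.mem_univ, true_and]
      exact ⟨fun h => lt_of_le_of_ne h.1 h.2, fun h => ⟨le_of_lt h, ne_of_lt h⟩⟩
  have hdiag : ∑ p ∈ Finset.univ.filter (fun p : Fin n × Fin n => p.1 ≤ p.2),
      (if p.1 = p.2 then G p else 0) =
      ∑ p ∈ Finset.univ.filter (fun p : Fin n × Fin n => p.1 = p.2), G p := by
    rw [← Finset.sum_filter, Finset.filter_filter]
    apply Finset.sum_congr _ (fun _ _ => rfl)
    ext p
    simp only [Finset.mem_filter, Finset.mem_univ, true_and]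
    exact ⟨fun h => h.2, fun h => ⟨le_of_eq h, h⟩⟩
  have hGswap_diag : ∀ p ∈ Finset.univ.filter (fun p : Fin n × Fin n => p.1 = p.2),
      G p.swap = G p := by
    intro p hp
    simp only [Finset.mem_filter] at hp
    have : p.swap = p := by ext <;> simp [Prod.swap, hp.2.symm]
    rw [this]
  rw [Finset.sum_sub_distrib, Finset.sum_add_distrib, hdiag]
  rw [hle_split (fun p => G p.swap)]
  rw [Finset.sum_congr rfl hGswap_diag]
  rw [hsplit, hswap]
  ring

/-- The coefficient vector of the linear form `(∑ᵢ aᵢ·xᵢxₖ)` in the monomials `xᵢxⱼ`. -/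
noncomputable def v (a : Fin n → ℕ) (k : Fin n) (p : Fin n × Fin n) : ℝ :=
  (if p.2 = k then (a p.1 : ℝ) else 0) + (if p.1 = k then (a p.2 : ℝ) else 0) -
  (if p.1 = k ∧ p.2 = k then (a k : ℝ) else 0)

lemma v_nonneg (a : Fin n → ℕ) (k : Fin n) (p : Fin n × Fin n) : 0 ≤ v a k p := by
  unfold v
  have h1 : (0:ℝ) ≤ a p.1 := Nat.cast_nonneg _
  have h2 : (0:ℝ) ≤ a p.2 := Nat.cast_nonneg _
  have h3 : (0:ℝ) ≤ a k := Nat.cast_nonneg _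
  split_ifs with ha hb hc hd he hf <;>
    first
      | (exfalso; tauto)
      | (try subst_vars) <;> simp_all <;> linarith

lemma subtype_sum (f : Fin n × Fin n → ℝ) :
    ∑ α : {p : Fin n × Fin n // p.1 ≤ p.2}, f α.1 =
    ∑ p ∈ Finset.univ.filter (fun p : Fin n × Fin n => p.1 ≤ p.2), f p :=
  (Finset.sum_subtype _ (by simp) f).symm

lemma lemA (a : Fin n → ℕ) (k : Fin n) (x : Fin n → ℝ) :
    ∑ α : {p : Fin n × Fin n // p.1 ≤ p.2}, v a k α.1 * (x α.1.1 * x α.1.2) =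
    (∑ i, (a i : ℝ) * x i) * x k := by
  rw [subtype_sum (fun p => v a k p * (x p.1 * x p.2))]
  have h := sym_sum (n := n)
    (fun p => (if p.2 = k then (a p.1 : ℝ) else 0) * (x p.1 * x p.2))
  have hpt : ∀ p : Fin n × Fin n,
      v a k p * (x p.1 * x p.2) =
      ((if p.2 = k then (a p.1 : ℝ) else 0) * (x p.1 * x p.2) +
       (if p.swap.2 = k then (a p.swap.1 : ℝ) else 0) * (x p.swap.1 * x p.swap.2) -
       if p.1 = p.2 then (if p.2 = k then (a p.1 : ℝ) else 0) * (x p.1 * x p.2) else 0) := by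
    rintro ⟨i, j⟩
    simp only [Prod.fst_swap, Prod.snd_swap, v]
    split_ifs <;> subst_vars <;> first | ring1 | tauto | simp_all
  rw [Finset.sum_congr rfl (fun p _ => hpt p), ← h]
  rw [Fintype.sum_prod_type]
  simp only [ite_mul, zero_mul, Finset.sum_ite_eq', Finset.mem_univ, if_true]
  rw [Finset.sum_mul]
  exact Finset.sum_congr rfl (fun i _ => by ring)

lemma lemB (x : Fin n → ℝ) :
    ∑ α : {p : Fin n × Fin n // p.1 ≤ p.2},
      (if α.1.1 = α.1.2 then (1:ℝ) else 2) * (x α.1.1 * x α.1.2)^2 =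
    (∑ i, x i ^ 2) ^ 2 := by
  rw [subtype_sum (fun p => (if p.1 = p.2 then (1:ℝ) else 2) * (x p.1 * x p.2)^2)]
  have h := sym_sum (n := n) (fun p => (x p.1)^2 * (x p.2)^2)
  have hpt : ∀ p : Fin n × Fin n,
      (if p.1 = p.2 then (1:ℝ) else 2) * (x p.1 * x p.2)^2 =
      ((x p.1)^2 * (x p.2)^2 + (x p.swap.1)^2 * (x p.swap.2)^2 -
       if p.1 = p.2 then (x p.1)^2 * (x p.2)^2 else 0) := by
    intro p
    simp only [Prod.fst_swap, Prod.snd_swap]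
    split_ifs <;> ring
  rw [Finset.sum_congr rfl (fun p _ => hpt p), ← h]
  rw [Fintype.sum_prod_type, sq (∑ i, x i ^ 2), Finset.sum_mul_sum]

lemma lemC (x : Fin n → ℝ) :
    ∑ α : {p : Fin n × Fin n // p.1 ≤ p.2},
      (if α.1.1 = α.1.2 then (1:ℝ) else 0) * (x α.1.1 * x α.1.2)^2 =
    ∑ i, x i ^ 4 := by
  rw [subtype_sum (fun p => (if p.1 = p.2 then (1:ℝ) else 0) * (x p.1 * x p.2)^2)]
  have h := sym_sum (n := n)
    (fun p => if p.1 = p.2 then (x p.1 * x p.2)^2 else 0)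
  have hpt : ∀ p : Fin n × Fin n,
      (if p.1 = p.2 then (1:ℝ) else 0) * (x p.1 * x p.2)^2 =
      ((if p.1 = p.2 then (x p.1 * x p.2)^2 else 0) +
       (if p.swap.1 = p.swap.2 then (x p.swap.1 * x p.swap.2)^2 else 0) -
       if p.1 = p.2 then (if p.1 = p.2 then (x p.1 * x p.2)^2 else 0) else 0) := by
    rintro ⟨i, j⟩
    simp only [Prod.fst_swap, Prod.snd_swap]
    split_ifs <;> subst_vars <;> first | ring1 | tauto | simp_all
  rw [Finset.sum_congr rfl (fun p _ => hpt p), ← h]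
  rw [Fintype.sum_prod_type]
  apply Finset.sum_congr rfl
  intro i _
  simp [Finset.sum_ite_eq]
  ring

end DsosAux




/-- A real symmetric matrix indexed by a finite type `Λ` is diagonally dominant if
`Q α α ≥ ∑_{β ≠ α} |Q α β|` for every `α`. -/
def IsDiagDom {Λ : Type*} [Fintype Λ] [DecidableEq Λ] (Q : Matrix Λ Λ ℝ) : Prop :=
  ∀ α, ∑ β ∈ Finset.univ.filter (fun β => β ≠ α), |Q α β| ≤ Q α α

/-- Feasibility of the LP (5.9): for any partition instance `a₁, …, aₙ` there exist
`ε ∈ ℝ` and a symmetric diagonally dominant Gram matrix `Q`, indexed by the set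
`Λ = {(i,j) : i ≤ j}` of monomials `xᵢxⱼ` of degree exactly 2, such that
`q^h_{a,ε}(x) = ∑_{α,β ∈ Λ} Q_{αβ} z_α(x) z_β(x)` for all `x`, i.e. `q^h_{a,ε}`
is dsos. -/
theorem dsos_partition_lp_feasible {n : ℕ} (hn : 1 ≤ n)
    (a : Fin n → ℕ) (ha : ∀ i, 0 < a i) :
    ∃ (ε : ℝ) (Q : Matrix {p : Fin n × Fin n // p.1 ≤ p.2}
        {p : Fin n × Fin n // p.1 ≤ p.2} ℝ),
      Q.IsSymm ∧ IsDiagDom Q ∧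
      ∀ x : Fin n → ℝ,
        (∑ i, x i ^ 4) +
            ((∑ i, (a i : ℝ) * x i) ^ 2 - 2 * ∑ i, x i ^ 2) *
              ((1 / (n : ℝ)) * ∑ i, x i ^ 2) +
            ((n : ℝ) - ε) * ((1 / (n : ℝ)) * ∑ i, x i ^ 2) ^ 2 =
          ∑ α, ∑ β, Q α β * (x α.1.1 * x α.1.2) * (x β.1.1 * x β.1.2) := by
  classical
  have hn0 : (n : ℝ) ≠ 0 := Nat.cast_ne_zero.mpr (by omega)
  have hninv : (0:ℝ) ≤ 1 / (n:ℝ) := by positivity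
  set T : Fin n → ℝ :=
    fun k => ∑ β : {p : Fin n × Fin n // p.1 ≤ p.2}, DsosAux.v a k β.1 with hT
  have hTk : ∀ k, ∑ β : {p : Fin n × Fin n // p.1 ≤ p.2}, DsosAux.v a k β.1 = T k :=
    fun _ => rfl
  set μ : ℝ := (1 / (n:ℝ)) * ∑ k, T k ^ 2 with hμ
  have hvnn : ∀ (k : Fin n) (p : Fin n × Fin n), 0 ≤ DsosAux.v a k p := DsosAux.v_nonneg a
  have hTnn : ∀ k, 0 ≤ T k := fun k => Finset.sum_nonneg fun β _ => hvnn k β.1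
  have hμnn : 0 ≤ μ :=
    mul_nonneg hninv (Finset.sum_nonneg fun k _ => sq_nonneg _)
  set Q : Matrix {p : Fin n × Fin n // p.1 ≤ p.2} {p : Fin n × Fin n // p.1 ≤ p.2} ℝ :=
    fun α β => (1 / (n:ℝ)) * ∑ k, DsosAux.v a k α.1 * DsosAux.v a k β.1 +
      (if α = β then (if α.1.1 = α.1.2 then (1:ℝ) else 0) +
        μ * (if α.1.1 = α.1.2 then (1:ℝ) else 2) else 0) with hQ
  have hQab : ∀ α β, Q α β = (1 / (n:ℝ)) * ∑ k, DsosAux.v a k α.1 * DsosAux.v a k β.1 +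
      (if α = β then (if α.1.1 = α.1.2 then (1:ℝ) else 0) +
        μ * (if α.1.1 = α.1.2 then (1:ℝ) else 2) else 0) := fun _ _ => rfl
  have hP : ∀ (α β : {p : Fin n × Fin n // p.1 ≤ p.2}), 0 ≤ (1 / (n:ℝ)) * ∑ k, DsosAux.v a k α.1 * DsosAux.v a k β.1 :=
    fun α β => mul_nonneg hninv
      (Finset.sum_nonneg fun k _ => mul_nonneg (hvnn k α.1) (hvnn k β.1))
  refine ⟨(n:ℝ) - (n:ℝ)^2 * (μ + 2 / (n:ℝ)), Q, ?_, ?_, ?_⟩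
  · -- symmetry
    ext α β
    rw [Matrix.transpose_apply, hQab, hQab]
    congr 1
    · exact congrArg _ (Finset.sum_congr rfl fun k _ => mul_comm _ _)
    · rcases eq_or_ne α β with h | h
      · subst h; rfl
      · rw [if_neg (Ne.symm h), if_neg h]
  · -- diagonal dominance
    intro α
    have hvleT : ∀ (k : Fin n) (β : {p : Fin n × Fin n // p.1 ≤ p.2}),
        DsosAux.v a k β.1 ≤ T k := fun k β =>
      Finset.single_le_sum (f := fun b : {p : Fin n × Fin n // p.1 ≤ p.2} =>
        DsosAux.v a k b.1) (fun b _ => hvnn k b.1) (Finset.mem_univ β)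
    have step1 : ∑ β ∈ Finset.univ.filter
          (fun β : {p : Fin n × Fin n // p.1 ≤ p.2} => β ≠ α), |Q α β| ≤
        ∑ β : {p : Fin n × Fin n // p.1 ≤ p.2},
          (1 / (n:ℝ)) * ∑ k, DsosAux.v a k α.1 * DsosAux.v a k β.1 := by
      refine le_trans (le_of_eq (Finset.sum_congr rfl ?_))
        (Finset.sum_le_sum_of_subset_of_nonneg (Finset.filter_subset _ _)
          (fun β _ _ => hP α β))
      intro β hβ
      simp only [Finset.mem_filter] at hβ
      rw [hQab, if_neg (Ne.symm hβ.2), add_zero, abs_of_nonneg (hP α β)]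
    have step2 : ∑ β : {p : Fin n × Fin n // p.1 ≤ p.2},
          (1 / (n:ℝ)) * ∑ k, DsosAux.v a k α.1 * DsosAux.v a k β.1 ≤ μ := by
      rw [← Finset.mul_sum, Finset.sum_comm, hμ]
      refine mul_le_mul_of_nonneg_left ?_ hninv
      refine Finset.sum_le_sum fun k _ => ?_
      rw [← Finset.mul_sum, hTk, sq]
      exact mul_le_mul_of_nonneg_right (hvleT k α) (hTnn k)
    have step3 : μ ≤ Q α α := by
      rw [hQab, if_pos rfl]
      have h0 : 0 ≤ (1 / (n:ℝ)) * ∑ k, DsosAux.v a k α.1 * DsosAux.v a k α.1 := hP α α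
      split_ifs <;> nlinarith [hμnn]
    exact le_trans (le_trans step1 step2) step3
  · -- the polynomial identity
    intro x
    have hA := fun k => DsosAux.lemA a k x
    have hB := DsosAux.lemB x
    have hC := DsosAux.lemC x
    set L : ℝ := ∑ i, (a i : ℝ) * x i with hL
    set S : ℝ := ∑ i, x i ^ 2 with hS
    have expand : ∀ α β : {p : Fin n × Fin n // p.1 ≤ p.2},
        Q α β * (x α.1.1 * x α.1.2) * (x β.1.1 * x β.1.2) =
        (1 / (n:ℝ)) * ∑ k, (DsosAux.v a k α.1 * (x α.1.1 * x α.1.2)) *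
            (DsosAux.v a k β.1 * (x β.1.1 * x β.1.2)) +
        (if α = β then ((if α.1.1 = α.1.2 then (1:ℝ) else 0) +
            μ * (if α.1.1 = α.1.2 then (1:ℝ) else 2)) *
            ((x α.1.1 * x α.1.2) * (x β.1.1 * x β.1.2)) else 0) := by
      intro α β
      rw [hQab, add_mul, add_mul]
      congr 1
      · rw [Finset.mul_sum, Finset.sum_mul, Finset.sum_mul, Finset.mul_sum]
        exact Finset.sum_congr rfl fun k _ => by ring
      · split_ifs <;> first | ring1 | simp
    have sq_part : ∑ α : {p : Fin n × Fin n // p.1 ≤ p.2},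
        ∑ β : {p : Fin n × Fin n // p.1 ≤ p.2},
          (1 / (n:ℝ)) * ∑ k, (DsosAux.v a k α.1 * (x α.1.1 * x α.1.2)) *
            (DsosAux.v a k β.1 * (x β.1.1 * x β.1.2)) =
        (1 / (n:ℝ)) * (L^2 * S) := by
      simp only [← Finset.mul_sum]
      congr 1
      have swap1 : ∑ α : {p : Fin n × Fin n // p.1 ≤ p.2},
          ∑ β : {p : Fin n × Fin n // p.1 ≤ p.2},
          ∑ k, (DsosAux.v a k α.1 * (x α.1.1 * x α.1.2)) *
            (DsosAux.v a k β.1 * (x β.1.1 * x β.1.2)) =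
          ∑ k, ∑ α : {p : Fin n × Fin n // p.1 ≤ p.2},
          ∑ β : {p : Fin n × Fin n // p.1 ≤ p.2},
            (DsosAux.v a k α.1 * (x α.1.1 * x α.1.2)) *
            (DsosAux.v a k β.1 * (x β.1.1 * x β.1.2)) := by
        rw [Finset.sum_congr rfl fun α (_ : α ∈ Finset.univ) => Finset.sum_comm]
        exact Finset.sum_comm
      rw [swap1]
      rw [Finset.sum_congr rfl fun k (_ : k ∈ Finset.univ) =>
        (Finset.sum_mul_sum Finset.univ Finset.univ
          (fun α : {p : Fin n × Fin n // p.1 ≤ p.2} =>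
            DsosAux.v a k α.1 * (x α.1.1 * x α.1.2))
          (fun β : {p : Fin n × Fin n // p.1 ≤ p.2} =>
            DsosAux.v a k β.1 * (x β.1.1 * x β.1.2))).symm]
      rw [Finset.sum_congr rfl fun k (_ : k ∈ Finset.univ) => by rw [hA k]]
      rw [hS, Finset.mul_sum]
      exact Finset.sum_congr rfl fun k _ => by ring
    have diag_part : ∑ α : {p : Fin n × Fin n // p.1 ≤ p.2},
        ∑ β : {p : Fin n × Fin n // p.1 ≤ p.2},
          (if α = β then ((if α.1.1 = α.1.2 then (1:ℝ) else 0) +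
            μ * (if α.1.1 = α.1.2 then (1:ℝ) else 2)) *
            ((x α.1.1 * x α.1.2) * (x β.1.1 * x β.1.2)) else 0) =
        (∑ i, x i ^ 4) + μ * S^2 := by
      rw [Finset.sum_congr rfl fun α (_ : α ∈ Finset.univ) => by
        rw [Finset.sum_ite_eq Finset.univ α
          (fun β : {p : Fin n × Fin n // p.1 ≤ p.2} =>
          ((if α.1.1 = α.1.2 then (1:ℝ) else 0) +
            μ * (if α.1.1 = α.1.2 then (1:ℝ) else 2)) *
            ((x α.1.1 * x α.1.2) * (x β.1.1 * x β.1.2))), if_pos (Finset.mem_univ α)]]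
      rw [Finset.sum_congr rfl fun α (_ : α ∈ Finset.univ) =>
        (show ((if α.1.1 = α.1.2 then (1:ℝ) else 0) +
            μ * (if α.1.1 = α.1.2 then (1:ℝ) else 2)) *
            ((x α.1.1 * x α.1.2) * (x α.1.1 * x α.1.2)) =
          (if α.1.1 = α.1.2 then (1:ℝ) else 0) * (x α.1.1 * x α.1.2)^2 +
          μ * ((if α.1.1 = α.1.2 then (1:ℝ) else 2) * (x α.1.1 * x α.1.2)^2) by ring)]
      rw [Finset.sum_add_distrib, ← Finset.mul_sum, hC, hB]

    rw [Finset.sum_congr rfl fun α (_ : α ∈ Finset.univ) =>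
      Finset.sum_congr rfl fun β (_ : β ∈ Finset.univ) => expand α β]
    rw [Finset.sum_congr rfl fun α (_ : α ∈ Finset.univ) => Finset.sum_add_distrib]
    rw [Finset.sum_add_distrib, sq_part, diag_part]
    field_simp
    ring
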